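/- arXiv:math/0403505 — 2 statements merged into one kernel-verified Lean document; each statement's English description precedes it below -/
import Mathlib

section
/- The map i : ℕ → flow graphs given by i(n) = F_n is injective and satisfies: i(0) = F_0, i(1) = F_1, i(n + m) = i(n) ⊕ i(m), i(n · m) = i(n) ⊗ i(m), and n ≤ m if and only if i(n) ≤ i(m) in the weak order, for all natural numbers n and m. (Thus the standard model of arithmetic on ℕ is a submodel of the structure of flow graphs with these operations.) -/
/-- A flow graph: a finite directed multigraph (loops and parallel edges allowed)
with a distinguished source vertex `s` and target vertex `t`.
(Connectedness is stated as a separate predicate `FlowGraph.Connected`.) -/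
structure FlowGraph where
  V : Type
  E : Type
  [finV : Finite V]
  [finE : Finite E]
  src : E → V
  tgt : E → V
  s : V
  t : V

attribute [instance] FlowGraph.finV FlowGraph.finE

namespace FlowGraph

/-- Adjacency in the underlying undirected multigraph, using only edges in `ES`. -/
def adjOn (A : FlowGraph) (ES : Set A.E) (u v : A.V) : Prop :=
  ∃ e ∈ ES, (A.src e = u ∧ A.tgt e = v) ∨ (A.src e = v ∧ A.tgt e = u)

/-- Reachability in the underlying undirected multigraph, using only edges in `ES`. -/
def reachOn (A : FlowGraph) (ES : Set A.E) : A.V → A.V → Prop :=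
  Relation.ReflTransGen (A.adjOn ES)

/-- The multigraph underlying a flow graph is connected. -/
def Connected (A : FlowGraph) : Prop := ∀ u v : A.V, A.reachOn Set.univ u v

/-- Isomorphism of flow graphs: a graph isomorphism mapping source to source
and target to target.  Equality "as flow graphs" means `Iso`. -/
def Iso (A B : FlowGraph) : Prop :=
  ∃ (φV : A.V ≃ B.V) (φE : A.E ≃ B.E),
    (∀ e, B.src (φE e) = φV (A.src e)) ∧
    (∀ e, B.tgt (φE e) = φV (A.tgt e)) ∧
    φV A.s = B.s ∧ φV A.t = B.t

/-- The relation identifying `t_A` with `s_B` in the disjoint union of vertex sets. -/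
def addRel (A B : FlowGraph) : (A.V ⊕ B.V) → (A.V ⊕ B.V) → Prop :=
  fun x y => x = Sum.inl A.t ∧ y = Sum.inr B.s

/-- The sum `A ⊕ B` of flow graphs: disjoint copies of `A` and `B`
with `t_A` identified with `s_B`; source `s_A`, target `t_B`. -/
def add (A B : FlowGraph) : FlowGraph where
  V := Quot (addRel A B)
  E := A.E ⊕ B.E
  src := fun e =>
    Quot.mk _ (Sum.elim (fun a => Sum.inl (A.src a)) (fun b => Sum.inr (B.src b)) e)
  tgt := fun e =>
    Quot.mk _ (Sum.elim (fun a => Sum.inl (A.tgt a)) (fun b => Sum.inr (B.tgt b)) e)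
  s := Quot.mk _ (Sum.inl A.s)
  t := Quot.mk _ (Sum.inr B.t)

/-- The relation gluing, for every edge `e = (u,v)` of `A`, the source of the
`e`-th copy of `B` to `u` and its target to `v`. -/
def mulRel (A B : FlowGraph) : (A.V ⊕ A.E × B.V) → (A.V ⊕ A.E × B.V) → Prop :=
  fun x y => ∃ e : A.E,
    (x = Sum.inr (e, B.s) ∧ y = Sum.inl (A.src e)) ∨
    (x = Sum.inr (e, B.t) ∧ y = Sum.inl (A.tgt e))

/-- The product `A ⊗ B` of flow graphs: every directed edge `e = (u,v)` of `A` is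
replaced by a fresh copy of `B`, with `u` identified with the source of the copy
and `v` with its target; source `s_A`, target `t_A`. -/
def mul (A B : FlowGraph) : FlowGraph where
  V := Quot (mulRel A B)
  E := A.E × B.E
  src := fun p => Quot.mk _ (Sum.inr (p.1, B.src p.2))
  tgt := fun p => Quot.mk _ (Sum.inr (p.1, B.tgt p.2))
  s := Quot.mk _ (Sum.inl A.s)
  t := Quot.mk _ (Sum.inl A.t)

/-- The trivial flow graph `F₀`: one vertex, no edges, source = target. -/
def F0 : FlowGraph where
  V := Unit
  E := Empty
  src := Empty.elim
  tgt := Empty.elim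
  s := ()
  t := ()

/-- The flow graph `F₁`: a single directed edge from source to target. -/
def F1 : FlowGraph where
  V := Bool
  E := Unit
  src := fun _ => false
  tgt := fun _ => true
  s := false
  t := true

/-- The graphical natural number `n`: the directed path with `n+1` vertices and
`n` edges, source its initial vertex and target its final vertex. -/
def pathGraph (n : ℕ) : FlowGraph where
  V := Fin (n + 1)
  E := Fin n
  src := fun e => e.castSucc
  tgt := fun e => e.succ
  s := 0
  t := Fin.last n

/-- A flow graph is infinitesimal if it is nontrivial and its source equals its target. -/
def Infinitesimal (A : FlowGraph) : Prop := ¬ A.Iso F0 ∧ A.s = A.t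

/-- `w` is a splitting vertex of `A`: `w ≠ s_A, t_A`, and after deleting `w`
(i.e. using only edges not incident to `w`), `s_A` and `t_A` lie in distinct
components (hence deletion produces at least two components). -/
def IsSplittingVertex (A : FlowGraph) (w : A.V) : Prop :=
  w ≠ A.s ∧ w ≠ A.t ∧ ¬ A.reachOn {e | A.src e ≠ w ∧ A.tgt e ≠ w} A.s A.t

/-- `e₀` is a splitting edge of `A`: deleting `e₀` leaves exactly two components,
one containing `s_A` and the other containing `t_A`. -/
def IsSplittingEdge (A : FlowGraph) (e₀ : A.E) : Prop :=
  ¬ A.reachOn {e | e ≠ e₀} A.s A.t ∧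
  ∀ v : A.V, A.reachOn {e | e ≠ e₀} v A.s ∨ A.reachOn {e | e ≠ e₀} v A.t

/-- The initial vertex of a directed edge traversed with direction `dir`
(`true` = forwards, `false` = backwards). -/
def stepSrc (A : FlowGraph) (p : A.E × Bool) : A.V := if p.2 then A.src p.1 else A.tgt p.1

/-- The final vertex of a directed edge traversed with direction `dir`. -/
def stepTgt (A : FlowGraph) (p : A.E × Bool) : A.V := if p.2 then A.tgt p.1 else A.src p.1

/-- `l` is a walk from `u` to `v` in the underlying undirected multigraph:
a list of edges each traversed in some direction, consecutively matching. -/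
def IsWalk (A : FlowGraph) : A.V → A.V → List (A.E × Bool) → Prop
  | u, v, [] => u = v
  | u, v, p :: l => A.stepSrc p = u ∧ A.IsWalk (A.stepTgt p) v l

/-- The list of vertices visited by a walk starting at `u`. -/
def walkVertices (A : FlowGraph) (u : A.V) : List (A.E × Bool) → List A.V
  | [] => [u]
  | p :: l => u :: A.walkVertices (A.stepTgt p) l

/-- The edge `e` has the ST property: some non-self-intersecting path from `s_A`
to `t_A` in the underlying undirected multigraph traverses `e`. -/
def HasST (A : FlowGraph) (e : A.E) : Prop :=
  ∃ l : List (A.E × Bool), A.IsWalk A.s A.t l ∧ (A.walkVertices A.s l).Nodup ∧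
    ∃ dir : Bool, (e, dir) ∈ l

/-- `A` is an st-flow graph: every edge has the ST property. -/
def IsSTGraph (A : FlowGraph) : Prop := ∀ e : A.E, A.HasST e

/-- The vertex set of the st-core: `s_A`, `t_A`, and all endpoints of ST edges. -/
def stCoreV (A : FlowGraph) : Set A.V :=
  {v | v = A.s ∨ v = A.t ∨ ∃ e, A.HasST e ∧ (A.src e = v ∨ A.tgt e = v)}

/-- The st-core of `A`: delete all edges without the ST property and keep the
subgraph induced by the remaining edges together with `s_A` and `t_A`. -/
def stCore (A : FlowGraph) : FlowGraph where
  V := {v // v ∈ A.stCoreV}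
  E := {e // A.HasST e}
  src := fun e => ⟨A.src e.1, Or.inr (Or.inr ⟨e.1, e.2, Or.inl rfl⟩)⟩
  tgt := fun e => ⟨A.tgt e.1, Or.inr (Or.inr ⟨e.1, e.2, Or.inr rfl⟩)⟩
  s := ⟨A.s, Or.inl rfl⟩
  t := ⟨A.t, Or.inr (Or.inl rfl)⟩

/-- An embedding of (the multigraph of) `A` into (the multigraph of) `B`:
injective on vertices and on edges, preserving directed incidence. -/
structure Emb (A B : FlowGraph) where
  vmap : A.V → B.V
  emap : A.E → B.E
  vinj : Function.Injective vmap
  einj : Function.Injective emap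
  src_map : ∀ e, B.src (emap e) = vmap (A.src e)
  tgt_map : ∀ e, B.tgt (emap e) = vmap (A.tgt e)

/-- `(V₁, E₁)` is a subgraph: all endpoints of edges in `E₁` lie in `V₁`. -/
def IsSubgraph (A : FlowGraph) (VS : Set A.V) (ES : Set A.E) : Prop :=
  ∀ e ∈ ES, A.src e ∈ VS ∧ A.tgt e ∈ VS

/-- The subgraph `(VS, ES)` is connected. -/
def SubConnected (A : FlowGraph) (VS : Set A.V) (ES : Set A.E) : Prop :=
  ∀ u ∈ VS, ∀ v ∈ VS, A.reachOn ES u v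

/-- An `(s,t)`-splitting of `A`: two connected subgraphs, the first containing
`s_A`, the second containing `t_A`, whose edge sets partition the edges of `A`. -/
def IsSplitting (A : FlowGraph) (V₁ V₂ : Set A.V) (E₁ E₂ : Set A.E) : Prop :=
  A.IsSubgraph V₁ E₁ ∧ A.IsSubgraph V₂ E₂ ∧
  A.SubConnected V₁ E₁ ∧ A.SubConnected V₂ E₂ ∧
  A.s ∈ V₁ ∧ A.t ∈ V₂ ∧
  E₁ ∪ E₂ = Set.univ ∧ E₁ ∩ E₂ = ∅

/-- The weak order `A ⩽ B`: there is an `(s,t)`-splitting `(H₁, H₂)` of `A` and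
graph embeddings `φᵢ : Hᵢ → B` with `φ₁ s_A = s_B`, `φ₂ t_A = t_B`, and whose
edge images are disjoint. -/
def weakLE (A B : FlowGraph) : Prop :=
  ∃ (V₁ V₂ : Set A.V) (E₁ E₂ : Set A.E)
    (φ₁V φ₂V : A.V → B.V) (φ₁E φ₂E : A.E → B.E),
    A.IsSplitting V₁ V₂ E₁ E₂ ∧
    Set.InjOn φ₁V V₁ ∧ Set.InjOn φ₂V V₂ ∧
    Set.InjOn φ₁E E₁ ∧ Set.InjOn φ₂E E₂ ∧
    (∀ e ∈ E₁, B.src (φ₁E e) = φ₁V (A.src e) ∧ B.tgt (φ₁E e) = φ₁V (A.tgt e)) ∧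
    (∀ e ∈ E₂, B.src (φ₂E e) = φ₂V (A.src e) ∧ B.tgt (φ₂E e) = φ₂V (A.tgt e)) ∧
    φ₁V A.s = B.s ∧ φ₂V A.t = B.t ∧
    (φ₁E '' E₁) ∩ (φ₂E '' E₂) = ∅

/-- `k`-fold sum `C ⊕ C ⊕ ⋯ ⊕ C` (`k` summands); `smul 0 C = F₀`. -/
def smul : ℕ → FlowGraph → FlowGraph
  | 0, _ => F0
  | n + 1, C => C.add (smul n C)

/-- Sum of a head flow graph with a list of further summands:
`sumList A₀ [A₁, …, Aₖ] = A₀ ⊕ A₁ ⊕ ⋯ ⊕ Aₖ`. -/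
def sumList (A : FlowGraph) (L : List FlowGraph) : FlowGraph := L.foldl add A

/-- `A` is ⊕-irreducible: it is not (isomorphic to) a sum of two nontrivial flow graphs. -/
def IsIrreducible (A : FlowGraph) : Prop :=
  ¬ ∃ B C : FlowGraph, B.Connected ∧ C.Connected ∧
      ¬ B.Iso F0 ∧ ¬ C.Iso F0 ∧ A.Iso (B.add C)

end FlowGraph

/-!
The vertices of `Fₙ ⊕ Fₘ` and `Fₙ ⊗ Fₘ` are read off by their distance from the source: vertex `j`
of the second summand sits at `n + j`, and vertex `j` of the copy of `Fₘ` on edge `e` sits at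
`j + m e`. This map out of the quotient is a bijection onto `Fin (n + m + 1)`, resp.
`Fin (n m + 1)`, because it has a section meeting every class. For the weak order, an embedding
of a connected `A` into `B` fixing the source gives `A ⩽ B` (take `H₂` to be the vertex `t_A`
alone), and conversely the two embeddings of a splitting inject the edges of `A` into those of
`B`, so `Fₙ ⩽ Fₘ` forces `n ≤ m`.
-/

theorem Quot.lift_bijective_of_section {α β : Type*} {r : α → α → Prop} {f : α → β}
    (hf : ∀ a b, r a b → f a = f b) (g : β → α) (hfg : ∀ b, f (g b) = b)
    (hgf : ∀ a, Quot.mk r (g (f a)) = Quot.mk r a) : Function.Bijective (Quot.lift f hf) := by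
  refine ⟨fun x y hxy => ?_, fun b => ⟨Quot.mk r (g b), hfg b⟩⟩
  induction x using Quot.ind with | mk a =>
  induction y using Quot.ind with | mk b =>
  rw [← hgf a, ← hgf b]
  exact congrArg (Quot.mk r ∘ g) hxy

namespace FlowGraph

theorem reachOn_symm {A : FlowGraph} {ES : Set A.E} {u v : A.V} (h : A.reachOn ES u v) :
    A.reachOn ES v u := by
  induction h with
  | refl => exact .refl
  | tail _ hadj ih =>
    obtain ⟨e, he, hends⟩ := hadj
    exact ih.head ⟨e, he, hends.symm⟩

theorem Iso.symm {A B : FlowGraph} : A.Iso B → B.Iso A := by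
  rintro ⟨φV, φE, hsrc, htgt, hs, ht⟩
  refine ⟨φV.symm, φE.symm, fun e => ?_, fun e => ?_, φV.symm_apply_eq.2 hs.symm,
    φV.symm_apply_eq.2 ht.symm⟩
  · exact (φV.symm_apply_eq.2 (by rw [← hsrc, φE.apply_symm_apply])).symm
  · exact (φV.symm_apply_eq.2 (by rw [← htgt, φE.apply_symm_apply])).symm

theorem Iso.natCard_E_eq {A B : FlowGraph} (h : A.Iso B) : Nat.card A.E = Nat.card B.E :=
  let ⟨_, φE, _⟩ := h
  Nat.card_congr φE

theorem pathGraph_reachOn_zero (n : ℕ) (v : Fin (n + 1)) :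
    (pathGraph n).reachOn Set.univ (0 : Fin (n + 1)) v := by
  induction v using Fin.induction with
  | zero => exact .refl
  | succ e ih => exact ih.tail ⟨e, trivial, Or.inl ⟨rfl, rfl⟩⟩

theorem pathGraph_connected (n : ℕ) : (pathGraph n).Connected := fun u v =>
  (reachOn_symm (pathGraph_reachOn_zero n u)).trans (pathGraph_reachOn_zero n v)

theorem eq_of_pathGraph_iso {n m : ℕ} (h : (pathGraph n).Iso (pathGraph m)) : n = m := by
  simpa [pathGraph] using h.natCard_E_eq

theorem pathGraph_zero_iso : (pathGraph 0).Iso F0 :=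
  ⟨Equiv.equivPUnit (Fin 1), Equiv.equivEmpty (Fin 0), finZeroElim, finZeroElim, rfl, rfl⟩

theorem pathGraph_one_iso : (pathGraph 1).Iso F1 :=
  ⟨finTwoEquiv, Equiv.equivPUnit (Fin 1), Fin.forall_fin_one.2 rfl, Fin.forall_fin_one.2 rfl,
    rfl, rfl⟩

def addVertexMap (n m : ℕ) : Fin (n + 1) ⊕ Fin (m + 1) → Fin (n + m + 1) :=
  Sum.elim (fun i => ⟨i, by omega⟩) (fun j => ⟨n + j, by omega⟩)

theorem addVertexMap_respects (n m : ℕ) :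
    ∀ a b, addRel (pathGraph n) (pathGraph m) a b → addVertexMap n m a = addVertexMap n m b := by
  rintro _ _ ⟨rfl, rfl⟩
  rfl

def addVertexSection (n m : ℕ) (k : Fin (n + m + 1)) : Fin (n + 1) ⊕ Fin (m + 1) :=
  if h : k ≤ n then .inl ⟨k, by omega⟩ else .inr ⟨k - n, by omega⟩

theorem addVertexMap_addVertexSection (n m : ℕ) (k : Fin (n + m + 1)) :
    addVertexMap n m (addVertexSection n m k) = k := by
  unfold addVertexSection
  split
  · rfl
  · exact Fin.ext (Nat.add_sub_cancel' (by omega))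

theorem mk_addVertexSection_addVertexMap (n m : ℕ) (a : Fin (n + 1) ⊕ Fin (m + 1)) :
    Quot.mk (addRel (pathGraph n) (pathGraph m)) (addVertexSection n m (addVertexMap n m a)) =
      Quot.mk (addRel (pathGraph n) (pathGraph m)) a := by
  rcases a with i | j
  · simp [addVertexSection, addVertexMap, Nat.le_of_lt_succ i.2]
  · by_cases hj : (j : ℕ) = 0
    · obtain rfl : j = 0 := Fin.ext hj
      simpa [addVertexSection, addVertexMap] using Quot.sound ⟨rfl, rfl⟩
    · simp [addVertexSection, addVertexMap, hj]

theorem pathGraph_add_iso (n m : ℕ) :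
    (pathGraph (n + m)).Iso ((pathGraph n).add (pathGraph m)) := by
  refine Iso.symm ⟨Equiv.ofBijective _ (Quot.lift_bijective_of_section
    (addVertexMap_respects n m) (addVertexSection n m) (addVertexMap_addVertexSection n m)
    (mk_addVertexSection_addVertexMap n m)), finSumFinEquiv, ?_, ?_, rfl, rfl⟩
  · rintro (e | e) <;> rfl
  · rintro (e | (e : Fin m))
    · rfl
    · exact Fin.ext (Nat.add_assoc n e 1)

theorem mk_inr_s_eq_mk_inl_src {A B : FlowGraph} (e : A.E) :
    Quot.mk (mulRel A B) (.inr (e, B.s)) = Quot.mk (mulRel A B) (.inl (A.src e)) :=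
  Quot.sound ⟨e, .inl ⟨rfl, rfl⟩⟩

theorem mk_inr_t_eq_mk_inl_tgt {A B : FlowGraph} (e : A.E) :
    Quot.mk (mulRel A B) (.inr (e, B.t)) = Quot.mk (mulRel A B) (.inl (A.tgt e)) :=
  Quot.sound ⟨e, .inr ⟨rfl, rfl⟩⟩

theorem mul_mk_inl_eq_of_reachOn {A B : FlowGraph} (hB : B.s = B.t) {u v : A.V}
    (h : A.reachOn Set.univ u v) :
    Quot.mk (mulRel A B) (.inl u) = Quot.mk (mulRel A B) (.inl v) := by
  induction h with
  | refl => rfl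
  | tail _ hadj ih =>
    obtain ⟨e, -, ⟨rfl, rfl⟩ | ⟨rfl, rfl⟩⟩ := hadj <;>
      rw [ih, ← mk_inr_s_eq_mk_inl_src, ← mk_inr_t_eq_mk_inl_tgt, hB]

def mulVertexMap (n m : ℕ) : Fin (n + 1) ⊕ Fin n × Fin (m + 1) → Fin (n * m + 1) :=
  Sum.elim (fun i => ⟨m * i, by have := i.2; nlinarith⟩)
    (fun p => ⟨p.2 + m * p.1, by have := p.1.2; have := p.2.2; nlinarith⟩)

theorem mulVertexMap_respects (n m : ℕ) :
    ∀ a b, mulRel (pathGraph n) (pathGraph m) a b → mulVertexMap n m a = mulVertexMap n m b := by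
  rintro _ _ ⟨(e : Fin n), ⟨rfl, rfl⟩ | ⟨rfl, rfl⟩⟩ <;> apply Fin.ext
  · exact Nat.zero_add _
  · exact (Nat.add_comm _ _).trans (Nat.mul_succ m e).symm

def mulVertexSection (n m : ℕ) (hm : 0 < m) (k : Fin (n * m + 1)) :
    Fin (n + 1) ⊕ Fin n × Fin (m + 1) :=
  if h : m ∣ k then
    .inl ⟨k / m, Nat.lt_succ_of_le (Nat.div_le_of_le_mul (by linarith [k.2, Nat.mul_comm n m]))⟩
  else
    have hk : (k : ℕ) < m * n := by
      have hk : (k : ℕ) ≠ n * m := fun hk => h (by rw [hk]; exact dvd_mul_left m n)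
      linarith [Nat.mul_comm n m, lt_of_le_of_ne (Nat.le_of_lt_succ k.2) hk]
    .inr (⟨k / m, Nat.div_lt_of_lt_mul hk⟩, ⟨k % m, Nat.lt_succ_of_lt (Nat.mod_lt _ hm)⟩)

theorem mulVertexMap_mulVertexSection (n m : ℕ) (hm : 0 < m) (k : Fin (n * m + 1)) :
    mulVertexMap n m (mulVertexSection n m hm k) = k := by
  unfold mulVertexSection
  split
  · exact Fin.ext (Nat.mul_div_cancel' ‹_›)
  · exact Fin.ext (Nat.mod_add_div k m)

theorem mk_mulVertexSection_mulVertexMap (n m : ℕ) (hm : 0 < m)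
    (a : Fin (n + 1) ⊕ Fin n × Fin (m + 1)) :
    Quot.mk (mulRel (pathGraph n) (pathGraph m)) (mulVertexSection n m hm (mulVertexMap n m a)) =
      Quot.mk (mulRel (pathGraph n) (pathGraph m)) a := by
  have hinl (i : Fin (n + 1)) : mulVertexSection n m hm (mulVertexMap n m (.inl i)) = .inl i :=
    (dif_pos (dvd_mul_right m i)).trans (congrArg Sum.inl (Fin.ext (Nat.mul_div_cancel_left _ hm)))
  have hglued {x : Fin n × Fin (m + 1)} {i : Fin (n + 1)}
      (hx : mulRel (pathGraph n) (pathGraph m) (.inr x) (.inl i)) :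
      Quot.mk (mulRel (pathGraph n) (pathGraph m))
          (mulVertexSection n m hm (mulVertexMap n m (.inr x))) =
        Quot.mk (mulRel (pathGraph n) (pathGraph m)) (.inr x) :=
    (congrArg (fun k => Quot.mk (mulRel (pathGraph n) (pathGraph m)) (mulVertexSection n m hm k))
      (mulVertexMap_respects n m _ _ hx)).trans
      ((congrArg (Quot.mk (mulRel (pathGraph n) (pathGraph m))) (hinl i)).trans
        (Quot.sound hx).symm)
  rcases a with i | ⟨e, j⟩
  · rw [hinl]
  · obtain hj | hj | hj : (j : ℕ) = 0 ∨ (j : ℕ) = m ∨ (0 < (j : ℕ) ∧ (j : ℕ) < m) := by omega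
    · obtain rfl : j = 0 := Fin.ext hj
      exact hglued ⟨e, .inl ⟨rfl, rfl⟩⟩
    · obtain rfl : j = Fin.last m := Fin.ext hj
      exact hglued ⟨e, .inr ⟨rfl, rfl⟩⟩
    · have hndvd : ¬ m ∣ j + m * e := by
        rw [Nat.dvd_add_left (dvd_mul_right m e)]
        exact Nat.not_dvd_of_pos_of_lt hj.1 hj.2
      simp [mulVertexSection, mulVertexMap, hndvd, Nat.add_mul_div_left _ _ hm,
        Nat.div_eq_of_lt hj.2, Nat.mod_eq_of_lt hj.2]

theorem mk_inl_s_eq_of_mul_pathGraph_zero (n : ℕ) (a : Fin (n + 1) ⊕ Fin n × Fin 1) :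
    Quot.mk (mulRel (pathGraph n) (pathGraph 0)) (.inl (pathGraph n).s) =
      Quot.mk (mulRel (pathGraph n) (pathGraph 0)) a := by
  rcases a with i | ⟨e, j⟩
  · exact mul_mk_inl_eq_of_reachOn rfl (pathGraph_connected n _ i)
  · obtain rfl : j = 0 := Subsingleton.elim _ _
    exact (mul_mk_inl_eq_of_reachOn rfl (pathGraph_connected n _ _)).trans
      (mk_inr_s_eq_mk_inl_src (A := pathGraph n) (B := pathGraph 0) e).symm

theorem pathGraph_mul_iso (n m : ℕ) :
    (pathGraph (n * m)).Iso ((pathGraph n).mul (pathGraph m)) := by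
  obtain ⟨g, hfg, hgf⟩ : ∃ g : Fin (n * m + 1) → Fin (n + 1) ⊕ Fin n × Fin (m + 1),
      (∀ k, mulVertexMap n m (g k) = k) ∧
      ∀ a, Quot.mk (mulRel (pathGraph n) (pathGraph m)) (g (mulVertexMap n m a)) =
        Quot.mk (mulRel (pathGraph n) (pathGraph m)) a := by
    rcases m.eq_zero_or_pos with rfl | hm
    -- `F₀` has `s = t`, so each copy of it collapses and `Fₙ ⊗ F₀` is a single vertex.
    · exact ⟨fun _ => .inl (pathGraph n).s, fun k => Fin.ext (by simp [mulVertexMap]),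
        mk_inl_s_eq_of_mul_pathGraph_zero n⟩
    · exact ⟨mulVertexSection n m hm, mulVertexMap_mulVertexSection n m hm,
        mk_mulVertexSection_mulVertexMap n m hm⟩
  refine Iso.symm ⟨Equiv.ofBijective _ (Quot.lift_bijective_of_section
    (mulVertexMap_respects n m) g hfg hgf), finProdFinEquiv, fun _ => rfl, ?_,
    Fin.ext (Nat.mul_zero m), Fin.ext (Nat.mul_comm m n)⟩
  rintro ⟨(e : Fin n), (j : Fin m)⟩
  exact Fin.ext (Nat.add_right_comm j 1 (m * e)).symm

theorem weakLE_of_emb {A B : FlowGraph} (hA : A.Connected) (φ : A.Emb B) (hs : φ.vmap A.s = B.s) :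
    A.weakLE B := by
  have hsingleton : A.SubConnected {A.t} ∅ := by
    rintro u rfl v rfl
    exact .refl
  exact ⟨Set.univ, {A.t}, Set.univ, ∅, φ.vmap, fun _ => B.t, φ.emap, φ.emap,
    ⟨fun _ _ => ⟨trivial, trivial⟩, fun _ he => he.elim, fun u _ v _ => hA u v, hsingleton,
      trivial, rfl, Set.union_empty _, Set.inter_empty _⟩,
    φ.vinj.injOn, Set.injOn_singleton _ _, φ.einj.injOn, Set.injOn_empty _,
    fun e _ => ⟨φ.src_map e, φ.tgt_map e⟩, fun _ he => he.elim, hs, rfl, by simp⟩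

theorem natCard_E_le_of_weakLE {A B : FlowGraph} (h : A.weakLE B) :
    Nat.card A.E ≤ Nat.card B.E := by
  classical
  obtain ⟨-, -, E₁, E₂, -, -, φ₁E, φ₂E, ⟨-, -, -, -, -, -, hcover, hdisj⟩, -, -, hinj₁, hinj₂,
    -, -, -, -, himg⟩ := h
  have hcompl : E₁ᶜ = E₂ := (IsCompl.of_eq hdisj hcover).compl_eq
  refine Nat.card_le_card_of_injective (E₁.piecewise φ₁E φ₂E)
    ((Set.injective_piecewise_iff _).2 ⟨hinj₁, hcompl ▸ hinj₂, fun x hx y hy => ?_⟩)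
  exact (Set.disjoint_iff_inter_eq_empty.2 himg).ne_of_mem (Set.mem_image_of_mem _ hx)
    (Set.mem_image_of_mem _ (hcompl ▸ hy))

theorem le_iff_pathGraph_weakLE (n m : ℕ) : n ≤ m ↔ (pathGraph n).weakLE (pathGraph m) := by
  refine ⟨fun h => weakLE_of_emb (pathGraph_connected n) ⟨Fin.castLE (by omega), Fin.castLE h,
    Fin.castLE_injective _, Fin.castLE_injective _, fun _ => rfl, fun _ => rfl⟩ rfl, fun h => ?_⟩
  simpa [pathGraph] using natCard_E_le_of_weakLE h

end FlowGraph

open FlowGraph in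
/-- The map `i : ℕ → FlowGraph`, `i n = Fₙ`, is injective (up to isomorphism) and
satisfies `i 0 = F₀`, `i 1 = F₁`, `i (n+m) = i n ⊕ i m`, `i (n·m) = i n ⊗ i m`, and
`n ≤ m ↔ i n ⩽ i m` in the weak order: the standard model of arithmetic embeds in
the flow graph structure. -/
theorem flowGraph_standard_submodel :
    (∀ n m : ℕ, (pathGraph n).Iso (pathGraph m) → n = m) ∧
    (pathGraph 0).Iso F0 ∧
    (pathGraph 1).Iso F1 ∧
    (∀ n m : ℕ, (pathGraph (n + m)).Iso ((pathGraph n).add (pathGraph m))) ∧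
    (∀ n m : ℕ, (pathGraph (n * m)).Iso ((pathGraph n).mul (pathGraph m))) ∧
    (∀ n m : ℕ, n ≤ m ↔ (pathGraph n).weakLE (pathGraph m)) :=
  ⟨fun _ _ => eq_of_pathGraph_iso, pathGraph_zero_iso, pathGraph_one_iso, pathGraph_add_iso,
    pathGraph_mul_iso, le_iff_pathGraph_weakLE⟩
end

section
/- If A and B are flow graphs such that A ⊕ B is an st-flow graph, then A and B are both st-flow graphs. -/
/-!
Gluing makes `t_A = s_B` a cut vertex of `A ⊕ B`: a walk from the `A` side to the `B` side must
pass through it. A simple path from `s_A` to `t_B` therefore visits it exactly once, so it is a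
simple `s_A`–`t_A` path of `A` followed by a simple `s_B`–`t_B` path of `B`, and each edge on it
lies on one of these two paths.
-/

namespace FlowGraph

section Walks

variable {G H : FlowGraph}

def IsPath (G : FlowGraph) (u v : G.V) (l : List (G.E × Bool)) : Prop :=
  G.IsWalk u v l ∧ (G.walkVertices u l).Nodup

theorem hasST_iff {e : G.E} :
    G.HasST e ↔ ∃ l, G.IsPath G.s G.t l ∧ ∃ dir, (e, dir) ∈ l := by
  simp only [HasST, IsPath, and_assoc]

theorem isPath_cons {u v : G.V} {p : G.E × Bool} {l : List (G.E × Bool)} :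
    G.IsPath u v (p :: l) ↔
      G.stepSrc p = u ∧ G.IsPath (G.stepTgt p) v l ∧ u ∉ G.walkVertices (G.stepTgt p) l := by
  simp only [IsPath, IsWalk, walkVertices, List.nodup_cons]
  tauto

theorem walkVertices_prefix_append (u : G.V) (l₁ l₂ : List (G.E × Bool)) :
    G.walkVertices u l₁ <+: G.walkVertices u (l₁ ++ l₂) := by
  induction l₁ generalizing u with
  | nil => cases l₂ <;> simp [walkVertices]
  | cons p l₁ ih => simpa [walkVertices] using ih (G.stepTgt p)

theorem walkVertices_suffix_append {u v : G.V} {l₁ : List (G.E × Bool)} (h : G.IsWalk u v l₁)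
    (l₂ : List (G.E × Bool)) : G.walkVertices v l₂ <:+ G.walkVertices u (l₁ ++ l₂) := by
  induction l₁ generalizing u with
  | nil => rw [show u = v from h]; rfl
  | cons p l₁ ih => exact (ih h.2).trans (List.suffix_cons _ _)

section Map

variable (f : G.V → H.V) (g : G.E → H.E)

theorem stepSrc_map
    (hsrc : ∀ e, H.src (g e) = f (G.src e)) (htgt : ∀ e, H.tgt (g e) = f (G.tgt e))
    (p : G.E × Bool) : H.stepSrc (Prod.map g id p) = f (G.stepSrc p) := by
  obtain ⟨e, _ | _⟩ := p <;> simp [stepSrc, hsrc, htgt]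

theorem stepTgt_map
    (hsrc : ∀ e, H.src (g e) = f (G.src e)) (htgt : ∀ e, H.tgt (g e) = f (G.tgt e))
    (p : G.E × Bool) : H.stepTgt (Prod.map g id p) = f (G.stepTgt p) := by
  obtain ⟨e, _ | _⟩ := p <;> simp [stepTgt, hsrc, htgt]

theorem IsWalk.map (hsrc : ∀ e, H.src (g e) = f (G.src e))
    (htgt : ∀ e, H.tgt (g e) = f (G.tgt e)) {u v : G.V} {l : List (G.E × Bool)}
    (h : G.IsWalk u v l) :
    H.IsWalk (f u) (f v) (l.map (Prod.map g id)) := by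
  induction l generalizing u with
  | nil => exact congrArg f h
  | cons p l ih =>
    exact ⟨(stepSrc_map f g hsrc htgt p).trans (congrArg f h.1),
      (stepTgt_map f g hsrc htgt p) ▸ ih h.2⟩

theorem walkVertices_map (hsrc : ∀ e, H.src (g e) = f (G.src e))
    (htgt : ∀ e, H.tgt (g e) = f (G.tgt e)) (u : G.V) (l : List (G.E × Bool)) :
    H.walkVertices (f u) (l.map (Prod.map g id)) = (G.walkVertices u l).map f := by
  induction l generalizing u with
  | nil => rfl
  | cons p l ih =>
    simp only [List.map_cons, walkVertices, stepTgt_map f g hsrc htgt, ih]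

end Map

end Walks

section Add

variable {A B : FlowGraph}

variable (A B) in
def addInl (a : A.V) : (A.add B).V := Quot.mk _ (.inl a)

variable (A B) in
def addInr (b : B.V) : (A.add B).V := Quot.mk _ (.inr b)

variable (A B) in
def addRetractLeft : (A.add B).V → A.V :=
  Quot.lift (Sum.elim id fun _ => A.t) (by rintro _ _ ⟨rfl, rfl⟩; rfl)

variable (A B) in
def addRetractRight : (A.add B).V → B.V :=
  Quot.lift (Sum.elim (fun _ => B.s) id) (by rintro _ _ ⟨rfl, rfl⟩; rfl)

theorem addInl_injective : Function.Injective (addInl A B) :=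
  fun _ _ h => congrArg (addRetractLeft A B) h

theorem addInr_injective : Function.Injective (addInr A B) :=
  fun _ _ h => congrArg (addRetractRight A B) h

theorem addInl_t : addInl A B A.t = addInr A B B.s :=
  Quot.sound ⟨rfl, rfl⟩

theorem addInl_eq_addInr {a : A.V} {b : B.V} (h : addInl A B a = addInr A B b) :
    a = A.t ∧ b = B.s :=
  ⟨congrArg (addRetractLeft A B) h, (congrArg (addRetractRight A B) h).symm⟩

theorem add_stepSrc_inl (e : A.E) (d : Bool) :
    (A.add B).stepSrc (.inl e, d) = addInl A B (A.stepSrc (e, d)) :=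
  stepSrc_map _ _ (fun _ => rfl) (fun _ => rfl) (e, d)

theorem add_stepTgt_inl (e : A.E) (d : Bool) :
    (A.add B).stepTgt (.inl e, d) = addInl A B (A.stepTgt (e, d)) :=
  stepTgt_map _ _ (fun _ => rfl) (fun _ => rfl) (e, d)

theorem add_stepSrc_inr (e : B.E) (d : Bool) :
    (A.add B).stepSrc (.inr e, d) = addInr A B (B.stepSrc (e, d)) :=
  stepSrc_map _ _ (fun _ => rfl) (fun _ => rfl) (e, d)

theorem add_stepTgt_inr (e : B.E) (d : Bool) :
    (A.add B).stepTgt (.inr e, d) = addInr A B (B.stepTgt (e, d)) :=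
  stepTgt_map _ _ (fun _ => rfl) (fun _ => rfl) (e, d)

theorem addInr_s_mem_walkVertices {a : A.V} {b : B.V} {l : List ((A.add B).E × Bool)}
    (h : (A.add B).IsWalk (addInl A B a) (addInr A B b) l) :
    addInr A B B.s ∈ (A.add B).walkVertices (addInl A B a) l := by
  induction l generalizing a with
  | nil =>
    obtain ⟨rfl, -⟩ := addInl_eq_addInr h
    exact List.mem_singleton.2 addInl_t.symm
  | cons p l ih =>
    obtain ⟨e | e, d⟩ := p
    · obtain ⟨-, h⟩ := h
      rw [add_stepTgt_inl] at h
      exact List.mem_cons_of_mem _ (by rw [add_stepTgt_inl]; exact ih h)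
    · obtain ⟨h, -⟩ := h
      rw [add_stepSrc_inr] at h
      obtain ⟨rfl, -⟩ := addInl_eq_addInr h.symm
      exact addInl_t ▸ List.mem_cons_self

theorem exists_eq_map_inr_of_isPath {b b' : B.V} {l : List ((A.add B).E × Bool)}
    (h : (A.add B).IsPath (addInr A B b) (addInr A B b') l) :
    ∃ lB : List (B.E × Bool), l = lB.map (Prod.map .inr id) ∧ B.IsWalk b b' lB := by
  induction l generalizing b with
  | nil => exact ⟨[], rfl, addInr_injective h.1⟩
  | cons p l ih =>
    obtain ⟨e | e, d⟩ := p
    · exfalso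
      rw [isPath_cons, add_stepSrc_inl, add_stepTgt_inl] at h
      obtain ⟨-, rfl⟩ := addInl_eq_addInr h.1
      exact h.2.2 (addInr_s_mem_walkVertices h.2.1.1)
    · rw [isPath_cons, add_stepSrc_inr, add_stepTgt_inr] at h
      obtain ⟨lB, rfl, hlB⟩ := ih h.2.1
      exact ⟨(e, d) :: lB, rfl, addInr_injective h.1, hlB⟩

theorem exists_eq_map_append_map_of_isPath {a : A.V} {b : B.V} {l : List ((A.add B).E × Bool)}
    (h : (A.add B).IsPath (addInl A B a) (addInr A B b) l) :
    ∃ (lA : List (A.E × Bool)) (lB : List (B.E × Bool)),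
      l = lA.map (Prod.map .inl id) ++ lB.map (Prod.map .inr id) ∧
        A.IsWalk a A.t lA ∧ B.IsWalk B.s b lB := by
  induction l generalizing a with
  | nil =>
    obtain ⟨rfl, rfl⟩ := addInl_eq_addInr h.1
    exact ⟨[], [], rfl, rfl, rfl⟩
  | cons p l ih =>
    obtain ⟨e | e, d⟩ := p
    · rw [isPath_cons, add_stepSrc_inl, add_stepTgt_inl] at h
      obtain ⟨lA, lB, rfl, hlA, hlB⟩ := ih h.2.1
      exact ⟨(e, d) :: lA, lB, rfl, ⟨addInl_injective h.1, hlA⟩, hlB⟩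
    · obtain ⟨rfl, -⟩ := addInl_eq_addInr ((add_stepSrc_inr e d).symm.trans h.1.1).symm
      rw [addInl_t] at h
      obtain ⟨lB, hl, hlB⟩ := exists_eq_map_inr_of_isPath h
      exact ⟨[], lB, hl, rfl, hlB⟩

theorem exists_isPath_of_isPath_add {l : List ((A.add B).E × Bool)}
    (h : (A.add B).IsPath (A.add B).s (A.add B).t l) :
    ∃ (lA : List (A.E × Bool)) (lB : List (B.E × Bool)),
      l = lA.map (Prod.map .inl id) ++ lB.map (Prod.map .inr id) ∧
        A.IsPath A.s A.t lA ∧ B.IsPath B.s B.t lB := by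
  replace h : (A.add B).IsPath (addInl A B A.s) (addInr A B B.t) l := h
  obtain ⟨lA, lB, rfl, hlA, hlB⟩ := exists_eq_map_append_map_of_isPath h
  have hwA : (A.add B).IsWalk (addInl A B A.s) (addInr A B B.s) (lA.map (Prod.map .inl id)) :=
    addInl_t ▸ hlA.map _ _ (fun _ => rfl) (fun _ => rfl)
  have hndA : (A.walkVertices A.s lA).Nodup := by
    refine .of_map (addInl A B) ?_
    rw [← walkVertices_map (addInl A B) Sum.inl (fun _ => rfl) (fun _ => rfl)]
    exact h.2.sublist (walkVertices_prefix_append _ _ _).sublist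
  have hndB : (B.walkVertices B.s lB).Nodup := by
    refine .of_map (addInr A B) ?_
    rw [← walkVertices_map (addInr A B) Sum.inr (fun _ => rfl) (fun _ => rfl)]
    exact h.2.sublist (walkVertices_suffix_append hwA _).sublist
  exact ⟨lA, lB, rfl, ⟨hlA, hndA⟩, ⟨hlB, hndB⟩⟩

theorem mem_of_inl_mem_map_append_map {e : A.E} {d : Bool} {lA : List (A.E × Bool)}
    {lB : List (B.E × Bool)}
    (h : ((.inl e, d) : (A.add B).E × Bool) ∈
      lA.map (Prod.map .inl id) ++ lB.map (Prod.map .inr id)) :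
    (e, d) ∈ lA := by
  rcases List.mem_append.1 h with h | h <;> obtain ⟨⟨e', d'⟩, h', heq⟩ := List.mem_map.1 h
  · cases heq
    exact h'
  · cases heq

theorem mem_of_inr_mem_map_append_map {e : B.E} {d : Bool} {lA : List (A.E × Bool)}
    {lB : List (B.E × Bool)}
    (h : ((.inr e, d) : (A.add B).E × Bool) ∈
      lA.map (Prod.map .inl id) ++ lB.map (Prod.map .inr id)) :
    (e, d) ∈ lB := by
  rcases List.mem_append.1 h with h | h <;> obtain ⟨⟨e', d'⟩, h', heq⟩ := List.mem_map.1 h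
  · cases heq
  · cases heq
    exact h'

theorem HasST.of_add_inl {e : A.E} (h : (A.add B).HasST (.inl e)) : A.HasST e := by
  obtain ⟨l, hl, dir, he⟩ := hasST_iff.1 h
  obtain ⟨lA, lB, rfl, hlA, -⟩ := exists_isPath_of_isPath_add hl
  exact hasST_iff.2 ⟨lA, hlA, dir, mem_of_inl_mem_map_append_map he⟩

theorem HasST.of_add_inr {e : B.E} (h : (A.add B).HasST (.inr e)) : B.HasST e := by
  obtain ⟨l, hl, dir, he⟩ := hasST_iff.1 h
  obtain ⟨lA, lB, rfl, -, hlB⟩ := exists_isPath_of_isPath_add hl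
  exact hasST_iff.2 ⟨lB, hlB, dir, mem_of_inr_mem_map_append_map he⟩

end Add

end FlowGraph

open FlowGraph in
theorem flowGraph_st_of_add_general (A B : FlowGraph)
    (h : (A.add B).IsSTGraph) :
    A.IsSTGraph ∧ B.IsSTGraph :=
  ⟨fun e => (h (.inl e)).of_add_inl, fun e => (h (.inr e)).of_add_inr⟩

open FlowGraph in
/-- If `A ⊕ B` is an st-flow graph then so are `A` and `B`. -/
theorem flowGraph_st_of_add (A B : FlowGraph)
    (hA : A.Connected) (hB : B.Connected)
    (h : (A.add B).IsSTGraph) :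
    A.IsSTGraph ∧ B.IsSTGraph :=
  flowGraph_st_of_add_general A B h
end
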